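/- Let K ⊆ L ⊆ M be a tower of fields with K a perfect field. If the polynomial composites K + X·L[X] and L + X·M[X] are both Noetherian rings, then K ⊆ M is a separable field extension and K + X·M[X] is a Noetherian ring. -/

import Mathlib

/-- The polynomial composite `A + X·B[X]`: the subring of `B[X]` of polynomials
whose constant coefficient lies in `A`. -/
def Subring.composite {B : Type*} [CommRing B] (A : Subring B) : Subring (Polynomial B) where
  carrier := {f : Polynomial B | f.coeff 0 ∈ A}
  mul_mem' {f g} hf hg := by
    simp only [Set.mem_setOf_eq, Polynomial.mul_coeff_zero] at *
    exact mul_mem hf hg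
  one_mem' := by
    simp only [Set.mem_setOf_eq, Polynomial.coeff_one_zero]
    exact one_mem A
  add_mem' {f g} hf hg := by
    simp only [Set.mem_setOf_eq, Polynomial.coeff_add] at *
    exact add_mem hf hg
  zero_mem' := by
    simp only [Set.mem_setOf_eq, Polynomial.coeff_zero]
    exact zero_mem A
  neg_mem' {f} hf := by
    simp only [Set.mem_setOf_eq, Polynomial.coeff_neg] at *
    exact neg_mem hf

theorem Subring.mem_composite {B : Type*} [CommRing B] (A : Subring B) (f : Polynomial B) :
    f ∈ A.composite ↔ f.coeff 0 ∈ A := Iff.rfl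

/-!
The ideal `X·L[X] ∩ (K + X·L[X])` is finitely generated, and reading off the coefficients of `X`
of its generators spans `L` over `K`; so a Noetherian composite forces `L/K` to be finite.
Conversely, if `M/K` is finite then `K + X·M[X]` is generated as a `K`-algebra by the finitely many
`b·X` with `b` running through a `K`-spanning set of `M`, hence is Noetherian. In the tower both
`L/K` and `M/L` are finite, so `M/K` is finite, and separable because `K` is perfect.
-/

open Polynomial

theorem Subring.monomial_mem_composite {B : Type*} [CommRing B] (A : Subring B) {n : ℕ}
    (hn : n ≠ 0) (b : B) : monomial n b ∈ A.composite := by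
  rw [Subring.mem_composite, coeff_monomial, if_neg hn]
  exact zero_mem A

theorem Module.Finite.of_isNoetherianRing_composite (K L : Type*) [CommRing K] [CommRing L]
    [Algebra K L] [IsNoetherianRing (algebraMap K L).range.composite] : Module.Finite K L := by
  classical
  set R := (algebraMap K L).range.composite
  let I : Ideal R := RingHom.ker (constantCoeff.comp R.subtype)
  have mem_I {f : R} : f ∈ I ↔ (f : L[X]).coeff 0 = 0 := by simp [I, coeff_zero_eq_eval_zero]
  obtain ⟨s, hs⟩ : I.FG := IsNoetherian.noetherian I
  let t := s.image fun f : R => (f : L[X]).coeff 1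
  let V := Submodule.span K (t : Set L)
  have coeff_one_mem : ∀ f ∈ I, (f : L[X]).coeff 1 ∈ V := by
    intro f hf
    rw [← hs] at hf
    induction hf using Submodule.span_induction with
    | mem f hf => exact Submodule.subset_span (Finset.mem_image_of_mem _ hf)
    | zero => simp
    | add f g _ _ hf hg => simpa using add_mem hf hg
    | smul r f hf hfV =>
      obtain ⟨k, hk⟩ : (r : L[X]).coeff 0 ∈ (algebraMap K L).range := r.2
      have hf0 : (f : L[X]).coeff 0 = 0 := mem_I.1 (hs ▸ hf)
      have : (r * f : L[X]).coeff 1 = k • (f : L[X]).coeff 1 := by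
        rw [mul_coeff_one, hf0, mul_zero, add_zero, ← hk, Algebra.smul_def]
      simpa [this] using V.smul_mem k hfV
  refine ⟨⟨t, eq_top_iff.2 fun c _ => ?_⟩⟩
  simpa using coeff_one_mem ⟨monomial 1 c, Subring.monomial_mem_composite _ one_ne_zero c⟩
    (mem_I.2 (by simp))

def Polynomial.compositeSubalgebra (K M : Type*) [CommRing K] [CommRing M] [Algebra K M] :
    Subalgebra K M[X] :=
  { (algebraMap K M).range.composite with algebraMap_mem' := fun k => ⟨k, by simp⟩ }

theorem Polynomial.adjoin_monomial_one_eq_compositeSubalgebra (K M : Type*) [CommRing K]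
    [CommRing M] [Algebra K M] {s : Set M} (hs : Submodule.span K s = ⊤) :
    Algebra.adjoin K (monomial 1 '' s) = compositeSubalgebra K M := by
  set A := Algebra.adjoin K (monomial 1 '' s)
  refine le_antisymm (Algebra.adjoin_le ?_) fun f hf => ?_
  · rintro _ ⟨b, -, rfl⟩
    exact Subring.monomial_mem_composite _ one_ne_zero b
  have monomial_one_mem (c : M) : monomial 1 c ∈ A := by
    have hc := Submodule.mem_map_of_mem (f := (monomial 1 : M →ₗ[M] M[X]).restrictScalars K)
      (hs ▸ Submodule.mem_top : c ∈ Submodule.span K s)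
    rw [Submodule.map_span] at hc
    exact Algebra.span_le_adjoin K _ hc
  have monomial_succ_mem (n : ℕ) (c : M) : monomial (n + 1) c ∈ A := by
    have : monomial (n + 1) c = monomial 1 c * monomial 1 1 ^ n := by
      rw [monomial_pow, monomial_mul_monomial, one_pow, mul_one, one_mul, add_comm]
    exact this ▸ mul_mem (monomial_one_mem c) (pow_mem (monomial_one_mem 1) n)
  obtain ⟨k, hk⟩ : f.coeff 0 ∈ (algebraMap K M).range := hf
  rw [f.as_sum_support]
  refine sum_mem fun n _ => ?_
  rcases n with _ | n
  · rw [← hk, monomial_zero_left, ← algebraMap_apply]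
    exact A.algebraMap_mem k
  · exact monomial_succ_mem n _

theorem Subring.isNoetherianRing_composite_of_finite (K M : Type*) [CommRing K]
    [IsNoetherianRing K] [CommRing M] [Algebra K M] [Module.Finite K M] :
    IsNoetherianRing (algebraMap K M).range.composite := by
  classical
  obtain ⟨s, hs⟩ := Module.Finite.fg_top (R := K) (M := M)
  have : Algebra.FiniteType K (compositeSubalgebra K M) := by
    rw [← adjoin_monomial_one_eq_compositeSubalgebra K M hs, ← Subalgebra.fg_iff_finiteType]
    exact ⟨s.image (monomial 1), by rw [Finset.coe_image]⟩
  exact Algebra.FiniteType.isNoetherianRing K (compositeSubalgebra K M)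

theorem composite_tower_separable (K L M : Type*) [Field K] [Field L] [Field M]
    [Algebra K L] [Algebra L M] [Algebra K M] [IsScalarTower K L M] [PerfectField K]
    (h1 : IsNoetherianRing ((algebraMap K L).range.composite))
    (h2 : IsNoetherianRing ((algebraMap L M).range.composite)) :
    Algebra.IsSeparable K M ∧ IsNoetherianRing ((algebraMap K M).range.composite) := by
  have : Module.Finite K L := .of_isNoetherianRing_composite K L
  have : Module.Finite L M := .of_isNoetherianRing_composite L M
  have : Module.Finite K M := .trans L M
  exact ⟨inferInstance, Subring.isNoetherianRing_composite_of_finite K M⟩
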